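/- arXiv:2404.10962 — 3 statements merged into one kernel-verified Lean document; each statement's English description precedes it below -/
import Mathlib

section
/- For every finite simple graph G, the dominating graph D(G) has at least one vertex of even degree. -/
/-!
The number of dominating sets of a finite graph is odd (Brouwer). Count pairs `(S, T)` of vertex
sets such that `T` avoids the closed neighbourhood `N[S]` of `S`. For fixed `S` there are
`2 ^ |N[S]ᶜ|` choices of `T`, an odd number exactly when `S` is dominating. On the other hand
the relation is symmetric, so modulo 2 only the diagonal pairs count, and `S` avoids `N[S]` only
for `S = ∅`. The handshake lemma then says that a graph on an odd number of vertices has a vertex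
of even degree.
-/

open SimpleGraph

/-- `D` is a dominating set of `G`: every vertex not in `D` has a neighbour in `D`. -/
def IsDomSet {V : Type*} (G : SimpleGraph V) (D : Set V) : Prop :=
  ∀ v ∉ D, ∃ u ∈ D, G.Adj u v

/-- The dominating graph of `G`: vertices are dominating sets of `G`, two dominating
sets are adjacent iff their symmetric difference has exactly one element. -/
def DomGraph {V : Type*} (G : SimpleGraph V) :
    SimpleGraph {D : Set V // IsDomSet G D} where
  Adj A B := (symmDiff A.1 B.1).ncard = 1
  symm := ⟨fun A B h => by
    have h' : (symmDiff A.1 B.1).ncard = 1 := h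
    show (symmDiff B.1 A.1).ncard = 1
    rwa [symmDiff_comm]⟩
  loopless := ⟨fun A h => by
    have h' : (symmDiff A.1 A.1).ncard = 1 := h
    simp [symmDiff_self, Set.bot_eq_empty] at h'⟩

/-- The `k`-dominating graph of `G`: vertices are dominating sets of `G` of cardinality
at most `k`, two such sets are adjacent iff their symmetric difference has exactly one
element. -/
def KDomGraph {V : Type*} (G : SimpleGraph V) (k : ℕ) :
    SimpleGraph {D : Set V // IsDomSet G D ∧ D.ncard ≤ k} where
  Adj A B := (symmDiff A.1 B.1).ncard = 1
  symm := ⟨fun A B h => by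
    have h' : (symmDiff A.1 B.1).ncard = 1 := h
    show (symmDiff B.1 A.1).ncard = 1
    rwa [symmDiff_comm]⟩
  loopless := ⟨fun A h => by
    have h' : (symmDiff A.1 A.1).ncard = 1 := h
    simp [symmDiff_self, Set.bot_eq_empty] at h'⟩

/-- A graph is Eulerian iff every vertex has even degree and any two edges lie in the
same connected component (i.e. at most one component contains an edge). -/
def IsEulerian {W : Type*} (H : SimpleGraph W) : Prop :=
  (∀ v : W, Even (H.neighborSet v).ncard) ∧
  ∀ u v x y : W, H.Adj u v → H.Adj x y → H.Reachable u x

open Finset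

theorem Finset.sum_two_pow_modEq_card_filter_eq_zero {ι : Type*} (s : Finset ι) (f : ι → ℕ) :
    ∑ i ∈ s, 2 ^ f i ≡ #{i ∈ s | f i = 0} [MOD 2] := by
  rw [card_filter]
  refine Nat.ModEq.sum fun i _ => ?_
  rcases f i with _ | k <;> simp [Nat.ModEq, Nat.pow_succ]

theorem Finset.sum_card_filter_modEq_card_filter_refl {α : Type*} [Fintype α] [DecidableEq α]
    {r : α → α → Prop} [DecidableRel r] (hr : ∀ a b, r a b → r b a) :
    ∑ a, #{b | r a b} ≡ #{a | r a a} [MOD 2] := by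
  -- The off-diagonal pairs are the ordered edges of `H`, so the handshake lemma counts them twice.
  let H : SimpleGraph α :=
    { Adj a b := a ≠ b ∧ r a b, symm := ⟨fun a b h => ⟨h.1.symm, hr a b h.2⟩⟩ }
  have hdeg : ∀ a, #{b | r a b} = H.degree a + if r a a then 1 else 0 := by
    intro a
    rw [← H.card_neighborFinset_eq_degree, H.neighborFinset_eq_filter,
      ← card_filter_add_card_filter_not (p := fun b => b ≠ a), filter_filter, filter_filter]
    congr 1
    · simp only [H, ne_comm, and_comm]
    · split_ifs with h
      · refine card_eq_one.2 ⟨a, ext fun b => ?_⟩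
        simp only [mem_filter_univ, mem_singleton, not_not]
        exact ⟨And.right, fun hb => ⟨hb ▸ h, hb⟩⟩
      · simp only [card_eq_zero, filter_eq_empty_iff, mem_univ, not_not, forall_const]
        rintro b ⟨hb, rfl⟩
        exact h hb
  simp_rw [hdeg, sum_add_distrib, H.sum_degrees_eq_twice_card_edges, sum_boole, Nat.cast_id]
  simp [Nat.ModEq]

theorem Finset.card_filter_disjoint {α : Type*} [Fintype α] [DecidableEq α] (s : Finset α) :
    #{t : Finset α | Disjoint t s} = 2 ^ #sᶜ := by
  rw [← card_powerset]
  congr 1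
  ext t
  simp [le_compl_iff_disjoint_right]

namespace SimpleGraph

variable {V : Type*} [Fintype V] [DecidableEq V] (G : SimpleGraph V) [DecidableRel G.Adj]

def closedNbhd (s : Finset V) : Finset V := {v | ∃ u ∈ s, u = v ∨ G.Adj u v}

variable {G}

theorem disjoint_closedNbhd_iff {s t : Finset V} :
    Disjoint t (G.closedNbhd s) ↔ ∀ u ∈ s, ∀ v ∈ t, u ≠ v ∧ ¬G.Adj u v := by
  simp only [closedNbhd, Finset.disjoint_left, mem_filter_univ, not_exists, not_and, not_or]
  exact ⟨fun h u hu v hv => h hv u hu, fun h v hv u hu => h u hu v hv⟩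

theorem disjoint_closedNbhd_comm {s t : Finset V} :
    Disjoint t (G.closedNbhd s) ↔ Disjoint s (G.closedNbhd t) := by
  simp only [disjoint_closedNbhd_iff]
  constructor <;>
    exact fun h u hu v hv => ⟨(h v hv u hu).1.symm, fun huv => (h v hv u hu).2 huv.symm⟩

theorem disjoint_closedNbhd_self {s : Finset V} : Disjoint s (G.closedNbhd s) ↔ s = ∅ := by
  rw [disjoint_closedNbhd_iff, eq_empty_iff_forall_notMem]
  exact ⟨fun h u hu => (h u hu u hu).1 rfl, fun h u hu => absurd hu (h u)⟩

theorem isDomSet_iff_closedNbhd_eq_univ {s : Finset V} :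
    IsDomSet G s ↔ G.closedNbhd s = univ := by
  simp only [IsDomSet, closedNbhd, eq_univ_iff_forall, mem_filter_univ, mem_coe]
  refine ⟨fun h v => ?_, fun h v hv => ?_⟩
  · by_cases hv : v ∈ s
    · exact ⟨v, hv, .inl rfl⟩
    · obtain ⟨u, hu, huv⟩ := h v hv
      exact ⟨u, hu, .inr huv⟩
  · obtain ⟨u, hu, rfl | huv⟩ := h v
    · exact absurd hu hv
    · exact ⟨u, hu, huv⟩

variable (G)

theorem odd_card_filter_closedNbhd_eq_univ : Odd #{s : Finset V | G.closedNbhd s = univ} := by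
  refine Nat.odd_iff.2 <| calc
    #{s : Finset V | G.closedNbhd s = univ} = #{s : Finset V | #(G.closedNbhd s)ᶜ = 0} := by
      simp_rw [card_eq_zero, compl_eq_empty_iff]
    _ ≡ ∑ s, 2 ^ #(G.closedNbhd s)ᶜ [MOD 2] :=
      (sum_two_pow_modEq_card_filter_eq_zero _ _).symm
    _ = ∑ s, #{t | Disjoint t (G.closedNbhd s)} := by simp_rw [card_filter_disjoint]
    _ ≡ #{s | Disjoint s (G.closedNbhd s)} [MOD 2] :=
      sum_card_filter_modEq_card_filter_refl fun _ _ => disjoint_closedNbhd_comm.1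
    _ = 1 := by
      rw [filter_congr fun _ _ => disjoint_closedNbhd_self]
      exact card_eq_one.2 ⟨∅, by ext; simp⟩

end SimpleGraph

theorem odd_natCard_isDomSet {V : Type*} [Fintype V] (G : SimpleGraph V) :
    Odd (Nat.card {D : Set V // IsDomSet G D}) := by
  classical
  rw [← Nat.card_congr (Fintype.finsetEquivSet.subtypeEquiv fun _ =>
      G.isDomSet_iff_closedNbhd_eq_univ.symm),
    Nat.card_eq_fintype_card, Fintype.card_subtype]
  exact G.odd_card_filter_closedNbhd_eq_univ

theorem SimpleGraph.exists_even_ncard_neighborSet_of_odd_natCard {W : Type*} [Finite W]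
    (H : SimpleGraph W) (h : Odd (Nat.card W)) : ∃ v, Even (H.neighborSet v).ncard := by
  classical
  cases nonempty_fintype W
  by_contra! hodd
  have hall : ({v | Odd (H.degree v)} : Finset W) = univ := by
    refine eq_univ_of_forall fun v => (mem_filter_univ v).2 ?_
    rw [← card_neighborFinset_eq_degree, ← Set.ncard_coe_finset, coe_neighborFinset]
    exact Nat.not_even_iff_odd.1 (hodd v)
  have heven := H.even_card_odd_degree_vertices
  rw [hall, card_univ, ← Nat.card_eq_fintype_card] at heven
  exact Nat.not_even_iff_odd.2 h heven

/-- The dominating graph of a finite graph has at least one vertex of even degree. -/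
theorem domGraph_exists_even_degree {V : Type*} [Fintype V] (G : SimpleGraph V) :
    ∃ d : {D : Set V // IsDomSet G D}, Even ((DomGraph G).neighborSet d).ncard :=
  (DomGraph G).exists_even_ncard_neighborSet_of_odd_natCard (odd_natCard_isDomSet G)
end

section
/- Let G and H be finite simple graphs on disjoint vertex sets and let G ⊔ H denote their disjoint union. Then the dominating graph D(G ⊔ H) is Eulerian if and only if both D(G) and D(H) are Eulerian. -/
open SimpleGraph

/-!
Splitting a dominating set of `G ⊔ H` into its two halves gives `D(G ⊔ H) ≅ D(G) □ D(H)`.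
Dominating graphs are connected (a dominating set grows to the whole vertex set one vertex at a
time), so for them being Eulerian means having only even degrees, and degrees add in a box product.
If every sum `deg A + deg B` is even, the degrees within each factor share one parity; that parity
is even because the number of dominating sets of a graph is odd (Brouwer–Csorba–Schrijver) and a
graph on an odd number of vertices has a vertex of even degree.
-/

section Eulerian

variable {V W : Type*} {P : SimpleGraph V} {Q : SimpleGraph W}

lemma IsEulerian.of_iso (e : P ≃g Q) (h : IsEulerian Q) : IsEulerian P := by
  refine ⟨fun v => ?_, fun u v x y huv hxy => ?_⟩
  · rw [Set.ncard_congr' (S := P.neighborSet v) (T := Q.neighborSet (e v))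
      (e.toEquiv.subtypeEquiv fun w => e.map_adj_iff.symm)]
    exact h.1 (e v)
  · simpa using (h.2 _ _ _ _ (e.map_adj_iff.2 huv) (e.map_adj_iff.2 hxy)).map e.symm.toHom

lemma isEulerian_congr (e : P ≃g Q) : IsEulerian P ↔ IsEulerian Q :=
  ⟨.of_iso e.symm, .of_iso e⟩

lemma isEulerian_iff_forall_even_degree [Fintype V] [DecidableRel P.Adj] (hP : P.Preconnected) :
    IsEulerian P ↔ ∀ v, Even (P.degree v) := by
  simp only [IsEulerian, ← card_neighborSet_eq_degree, ← Nat.card_coe_set_eq,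
    Nat.card_eq_fintype_card]
  exact ⟨fun h => h.1, fun h => ⟨h, fun u _ x _ _ _ => hP u x⟩⟩

lemma exists_even_degree_of_odd_card [Fintype V] [DecidableRel P.Adj]
    (hV : Odd (Fintype.card V)) : ∃ v, Even (P.degree v) := by
  by_contra! hodd
  have hall : ({v | Odd (P.degree v)} : Finset V) = Finset.univ :=
    Finset.filter_true_of_mem fun v _ => Nat.not_even_iff_odd.1 (hodd v)
  have := P.even_card_odd_degree_vertices
  rw [hall, Finset.card_univ] at this
  exact Nat.not_even_iff_odd.2 hV this

lemma forall_even_degree_boxProd_iff [Fintype V] [Fintype W]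
    [DecidableRel P.Adj] [DecidableRel Q.Adj]
    (hV : Odd (Fintype.card V)) (hW : Odd (Fintype.card W)) :
    (∀ x, Even ((P □ Q).degree x)) ↔ (∀ v, Even (P.degree v)) ∧ ∀ w, Even (Q.degree w) := by
  simp only [degree_boxProd, Prod.forall]
  refine ⟨fun h => ⟨fun v => ?_, fun w => ?_⟩, fun h v w => (h.1 v).add (h.2 w)⟩
  · obtain ⟨w, hw⟩ := exists_even_degree_of_odd_card (P := Q) hW
    exact (Nat.even_add.1 (h v w)).2 hw
  · obtain ⟨v, hv⟩ := exists_even_degree_of_odd_card (P := P) hV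
    exact (Nat.even_add.1 (h v w)).1 hv

lemma isEulerian_boxProd_iff [Finite V] [Finite W] (hP : P.Preconnected) (hQ : Q.Preconnected)
    (hV : Odd (Nat.card V)) (hW : Odd (Nat.card W)) :
    IsEulerian (P □ Q) ↔ IsEulerian P ∧ IsEulerian Q := by
  classical
  have := Fintype.ofFinite V
  have := Fintype.ofFinite W
  rw [Nat.card_eq_fintype_card] at hV hW
  rw [isEulerian_iff_forall_even_degree hP, isEulerian_iff_forall_even_degree hQ,
    isEulerian_iff_forall_even_degree (hP.boxProd hQ)]
  convert forall_even_degree_boxProd_iff (P := P) (Q := Q) hV hW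

end Eulerian

section Domination

variable {α β : Type*}

lemma isDomSet_univ (G : SimpleGraph α) : IsDomSet G Set.univ :=
  fun _ hv => absurd (Set.mem_univ _) hv

lemma IsDomSet.mono {G : SimpleGraph α} {D E : Set α} (hD : IsDomSet G D) (hDE : D ⊆ E) :
    IsDomSet G E := fun v hv =>
  let ⟨u, hu, huv⟩ := hD v fun h => hv (hDE h)
  ⟨u, hDE hu, huv⟩

lemma isDomSet_sum_iff (G : SimpleGraph α) (H : SimpleGraph β) (D : Set (α ⊕ β)) :
    IsDomSet (G ⊕g H) D ↔ IsDomSet G (Sum.inl ⁻¹' D) ∧ IsDomSet H (Sum.inr ⁻¹' D) := by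
  refine ⟨fun hD => ⟨fun a ha => ?_, fun b hb => ?_⟩, fun ⟨hG, hH⟩ => ?_⟩
  · obtain ⟨u | u, hu, hadj⟩ := hD (.inl a) ha
    · exact ⟨u, hu, by simpa using hadj⟩
    · simp at hadj
  · obtain ⟨u | u, hu, hadj⟩ := hD (.inr b) hb
    · simp at hadj
    · exact ⟨u, hu, by simpa using hadj⟩
  · rintro (a | b) hx
    · obtain ⟨u, hu, hadj⟩ := hG a hx
      exact ⟨.inl u, hu, by simpa using hadj⟩
    · obtain ⟨u, hu, hadj⟩ := hH b hx
      exact ⟨.inr u, hu, by simpa using hadj⟩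

lemma domGraph_adj_insert {G : SimpleGraph α} (D : {D : Set α // IsDomSet G D}) {a : α}
    (ha : a ∉ D.1) : (DomGraph G).Adj D ⟨insert a D.1, D.2.mono (Set.subset_insert a D.1)⟩ := by
  show (symmDiff D.1 (insert a D.1)).ncard = 1
  rw [symmDiff_of_le (Set.subset_insert a D.1), Set.insert_sdiff_eq_singleton ha,
    Set.ncard_singleton]

lemma domGraph_reachable_union {G : SimpleGraph α} (D : {D : Set α // IsDomSet G D}) {S : Set α}
    (hS : S.Finite) : (DomGraph G).Reachable D ⟨D.1 ∪ S, D.2.mono Set.subset_union_left⟩ := by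
  induction S, hS using Set.Finite.induction_on with
  | empty => simp
  | @insert a S _ _ ih =>
    simp only [Set.union_insert]
    by_cases ha : a ∈ D.1 ∪ S
    · simpa [Set.insert_eq_of_mem ha] using ih
    · exact ih.trans (domGraph_adj_insert ⟨_, _⟩ ha).reachable

lemma domGraph_preconnected [Finite α] (G : SimpleGraph α) : (DomGraph G).Preconnected := by
  have hreach (D : {D : Set α // IsDomSet G D}) : (DomGraph G).Reachable D ⟨_, isDomSet_univ G⟩ := by
    simpa using domGraph_reachable_union D Set.finite_univ
  exact fun D E => (hreach D).trans (hreach E).symm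

end Domination

lemma Function.Involutive.odd_card_of_isFixedPt_iff {X : Type*} [Fintype X] {f : X → X}
    (hf : f.Involutive) {x₀ : X} (hfix : ∀ x, f.IsFixedPt x ↔ x = x₀) :
    Odd (Fintype.card X) := by
  classical
  let g : Function.End X := f
  have hmod := Equiv.Perm.card_fixedPoints_modEq (p := 2) (n := 1) (f := g) (funext hf)
  have hone : Fintype.card (Function.fixedPoints g) = 1 :=
    Fintype.card_eq_one_iff.2 ⟨⟨x₀, (hfix x₀).2 rfl⟩, fun x => Subtype.ext ((hfix x).1 x.2)⟩
  rw [hone] at hmod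
  exact Nat.odd_iff.2 hmod

section OddDomSets

variable {α : Type*} (G : SimpleGraph α)

def undominatedSet (A : Set α) : Set α := {b | ∀ a ∈ A, a ≠ b ∧ ¬G.Adj a b}

variable {G}

lemma subset_undominatedSet_comm {A B : Set α} :
    B ⊆ undominatedSet G A ↔ A ⊆ undominatedSet G B := by
  simp only [undominatedSet, Set.subset_def, Set.mem_ofPred_eq]
  exact ⟨fun h a ha b hb => (h b hb a ha).imp Ne.symm fun h' hab => h' hab.symm,
    fun h b hb a ha => (h a ha b hb).imp Ne.symm fun h' hab => h' hab.symm⟩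

lemma subset_undominatedSet_self_iff {A : Set α} : A ⊆ undominatedSet G A ↔ A = ∅ := by
  refine ⟨fun h => Set.eq_empty_of_forall_notMem fun a ha => (h ha a ha).1 rfl, ?_⟩
  rintro rfl
  exact Set.empty_subset _

lemma isDomSet_iff_undominatedSet_eq_empty {A : Set α} :
    IsDomSet G A ↔ undominatedSet G A = ∅ := by
  simp only [IsDomSet, Set.eq_empty_iff_forall_notMem, undominatedSet, Set.mem_ofPred_eq]
  refine forall_congr' fun v => ⟨fun h hv => ?_, fun h hv => ?_⟩
  · by_cases hvA : v ∈ A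
    · exact (hv v hvA).1 rfl
    · obtain ⟨u, hu, huv⟩ := h hvA
      exact (hv u hu).2 huv
  · simp only [not_forall, not_and_or, not_not] at h
    obtain ⟨u, hu, rfl | huv⟩ := h
    exacts [absurd hu hv, ⟨u, hu, huv⟩]

/- Swapping is an involution on the pairs `(A, B)` with `B ⊆ undominatedSet G A`, fixing only
`(∅, ∅)`; the pairs over a given `A` number `2 ^ #(undominatedSet G A)`, which is odd exactly when
`A` dominates. -/
lemma odd_card_isDomSet [Finite α] (G : SimpleGraph α) :
    Odd (Nat.card {D : Set α // IsDomSet G D}) := by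
  classical
  have := Fintype.ofFinite α
  have hX : Odd (Fintype.card {p : Set α × Set α // p.2 ⊆ undominatedSet G p.1}) := by
    refine Function.Involutive.odd_card_of_isFixedPt_iff
      (f := fun p => ⟨p.1.swap, subset_undominatedSet_comm.1 p.2⟩)
      (x₀ := ⟨(∅, ∅), Set.empty_subset _⟩) (fun _ => rfl) ?_
    rintro ⟨⟨A, B⟩, h⟩
    simp only [Function.IsFixedPt, Subtype.ext_iff, Prod.swap_prod_mk, Prod.mk.injEq]
    refine ⟨fun ⟨hBA, _⟩ => ?_, fun ⟨hA, hB⟩ => ⟨hB.trans hA.symm, hA.trans hB.symm⟩⟩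
    subst hBA
    exact ⟨subset_undominatedSet_self_iff.1 h, subset_undominatedSet_self_iff.1 h⟩
  have hsum : Fintype.card {p : Set α × Set α // p.2 ⊆ undominatedSet G p.1} =
      ∑ A : Set α, 2 ^ Fintype.card (undominatedSet G A) := by
    rw [Fintype.card_congr (Equiv.subtypeProdEquivSigmaSubtype fun A B => B ⊆ undominatedSet G A),
      Fintype.card_sigma]
    congr with A
    exact (Fintype.card_congr (Equiv.Set.powerset _)).trans Fintype.card_set
  rw [hsum, Finset.odd_sum_iff_odd_card_odd] at hX
  rw [Nat.card_eq_fintype_card, Fintype.card_subtype]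
  convert hX using 3 with A
  simp [← Nat.not_even_iff_odd, Nat.even_pow, isDomSet_iff_undominatedSet_eq_empty,
    Set.eq_empty_iff_forall_notMem]

end OddDomSets

section Sum

variable {α β : Type*}

lemma Set.ncard_preimage_inl_add_ncard_preimage_inr {S : Set (α ⊕ β)}
    (hS : S.Finite := by toFinite_tac) :
    (Sum.inl ⁻¹' S).ncard + (Sum.inr ⁻¹' S).ncard = S.ncard := by
  conv_rhs => rw [← Set.image_preimage_inl_union_image_preimage_inr S]
  rw [Set.ncard_union_eq
      Set.disjoint_image_inl_image_inr
      ((hS.preimage Sum.inl_injective.injOn).image _)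
      ((hS.preimage Sum.inr_injective.injOn).image _),
    Set.ncard_image_of_injective _ Sum.inl_injective,
    Set.ncard_image_of_injective _ Sum.inr_injective]

lemma ncard_symmDiff_eq_one_iff_sum [Finite α] [Finite β] (D E : Set (α ⊕ β)) :
    (symmDiff D E).ncard = 1 ↔
      (symmDiff (Sum.inl ⁻¹' D) (Sum.inl ⁻¹' E)).ncard = 1 ∧ Sum.inr ⁻¹' D = Sum.inr ⁻¹' E ∨
      (symmDiff (Sum.inr ⁻¹' D) (Sum.inr ⁻¹' E)).ncard = 1 ∧ Sum.inl ⁻¹' D = Sum.inl ⁻¹' E := by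
  rw [← Set.ncard_preimage_inl_add_ncard_preimage_inr, Set.preimage_symmDiff,
    Set.preimage_symmDiff, Nat.add_eq_one_iff]
  simp only [Set.ncard_eq_zero (Set.toFinite _), ← Set.bot_eq_empty, symmDiff_eq_bot]
  tauto

variable [Finite α] [Finite β] (G : SimpleGraph α) (H : SimpleGraph β)

def domGraphSumIso : DomGraph (G ⊕g H) ≃g DomGraph G □ DomGraph H where
  toEquiv := (Set.sumEquiv.toEquiv.subtypeEquiv (isDomSet_sum_iff G H)).trans
    Equiv.subtypeProdEquivProd
  map_rel_iff' {D E} := by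
    simp only [boxProd_adj, Subtype.ext_iff]
    exact (ncard_symmDiff_eq_one_iff_sum D.1 E.1).symm

end Sum

/-- The dominating graph of a disjoint union is Eulerian iff the dominating graphs of
both parts are Eulerian. -/
theorem domGraph_sum_eulerian_iff {α β : Type*} [Fintype α] [Fintype β]
    (G : SimpleGraph α) (H : SimpleGraph β) :
    IsEulerian (DomGraph (G ⊕g H)) ↔ IsEulerian (DomGraph G) ∧ IsEulerian (DomGraph H) := by
  rw [isEulerian_congr (domGraphSumIso G H)]
  exact isEulerian_boxProd_iff (domGraph_preconnected G) (domGraph_preconnected H)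
    (odd_card_isDomSet G) (odd_card_isDomSet H)
end

section
/- Let n ≥ 4 be an even integer, let H_n be the cocktail party graph on n vertices, and let k be an integer with 2 < k < n. Then the k-dominating graph D_k(H_n) is Eulerian if and only if k is even. -/
open SimpleGraph

/-- `G` is a cocktail party graph: the complete graph with a perfect matching removed,
i.e. there is a fixed-point-free involutive pairing `f` of the vertices such that two
distinct vertices are adjacent iff they are not paired. -/
def IsCocktailParty {V : Type*} (G : SimpleGraph V) : Prop :=
  ∃ f : V → V, Function.Involutive f ∧ (∀ v, f v ≠ v) ∧
    ∀ u v, G.Adj u v ↔ u ≠ v ∧ f u ≠ v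

/-! In a cocktail party graph the dominating sets are exactly the sets of at least two vertices,
so a set `A` with `|A| = m` has `m` neighbours in `D_k` by deletion when `m > 2` and `n - m` by
insertion when `m < k`. The degrees are therefore `n - 2`, `n` or `k`, all even iff `k` is.
For connectivity, any `A ∋ a` reaches the pair `{a, b}` through `{a, a'} ⊆ A` and
`{a, a', b}`, and two dominating sets always contain distinct `a`, `b` respectively. -/

namespace Set

variable {V : Type*}

theorem symmDiff_singleton_of_mem {A : Set V} {v : V} (hv : v ∈ A) :
    symmDiff A {v} = A \ {v} := by
  ext x; by_cases hx : x = v <;> simp_all [Set.mem_symmDiff]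

theorem symmDiff_singleton_of_notMem {A : Set V} {v : V} (hv : v ∉ A) :
    symmDiff A {v} = insert v A := by
  ext x; by_cases hx : x = v <;> simp_all [Set.mem_symmDiff]

theorem ncard_setOf_ncard_symmDiff_singleton [Finite V] (A : Set V) (P : ℕ → Prop)
    [DecidablePred P] :
    {v | P (symmDiff A {v}).ncard}.ncard =
      (if P (A.ncard - 1) then A.ncard else 0) +
        if P (A.ncard + 1) then Nat.card V - A.ncard else 0 := by
  have hsplit : {v | P (symmDiff A {v}).ncard} =
      {v ∈ A | P (A.ncard - 1)} ∪ {v ∈ Aᶜ | P (A.ncard + 1)} := by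
    ext v
    by_cases hv : v ∈ A
    · simp [symmDiff_singleton_of_mem hv, ncard_sdiff_singleton_of_mem hv, hv]
    · simp [symmDiff_singleton_of_notMem hv, ncard_insert_of_notMem hv, hv]
  have hdisj : Disjoint {v ∈ A | P (A.ncard - 1)} {v ∈ Aᶜ | P (A.ncard + 1)} :=
    disjoint_compl_right.mono (fun _ h => h.1) (fun _ h => h.1)
  rw [hsplit, ncard_union_eq hdisj]
  congr 1 <;> split_ifs with h
  all_goals simp only [h, and_true, and_false, ofPred_false, ncard_empty, ofPred_mem_eq]
  exact ncard_compl A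

end Set

theorem IsDomSet.mono_s14 {V : Type*} {G : SimpleGraph V} {A B : Set V} (hA : IsDomSet G A)
    (hAB : A ⊆ B) : IsDomSet G B := fun v hv =>
  let ⟨u, hu, huv⟩ := hA v (fun h => hv (hAB h))
  ⟨u, hAB hu, huv⟩

namespace KDomGraph

variable {V : Type*} {G : SimpleGraph V} {k : ℕ}

theorem adj_iff {A B : {D : Set V // IsDomSet G D ∧ D.ncard ≤ k}} :
    (KDomGraph G k).Adj A B ↔ ∃ v, B.1 = symmDiff A.1 {v} := by
  change (symmDiff A.1 B.1).ncard = 1 ↔ _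
  simp only [Set.ncard_eq_one]
  constructor
  · rintro ⟨v, hv⟩
    exact ⟨v, by rw [← hv, symmDiff_symmDiff_cancel_left]⟩
  · rintro ⟨v, hv⟩
    exact ⟨v, by rw [hv, symmDiff_symmDiff_cancel_left]⟩

theorem ncard_neighborSet (A : {D : Set V // IsDomSet G D ∧ D.ncard ≤ k}) :
    ((KDomGraph G k).neighborSet A).ncard =
      {v | IsDomSet G (symmDiff A.1 {v}) ∧ (symmDiff A.1 {v}).ncard ≤ k}.ncard := by
  symm
  refine Set.ncard_congr (fun v hv => ⟨symmDiff A.1 {v}, hv⟩)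
    (fun v _ => adj_iff.mpr ⟨v, rfl⟩) (fun v w _ _ h => ?_) (fun B hB => ?_)
  · exact Set.singleton_injective (symmDiff_right_injective A.1 (congrArg Subtype.val h))
  · obtain ⟨v, hv⟩ := adj_iff.mp hB
    exact ⟨v, show _ ∧ _ by rw [← hv]; exact B.2, Subtype.ext hv.symm⟩

theorem reachable_of_subset [Finite V] {A B : {D : Set V // IsDomSet G D ∧ D.ncard ≤ k}}
    (hAB : A.1 ⊆ B.1) : (KDomGraph G k).Reachable A B := by
  induction h : (B.1 \ A.1).ncard using Nat.strong_induction_on generalizing A with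
  | _ m ih =>
    obtain hBA | ⟨v, hvB, hvA⟩ := (B.1 \ A.1).eq_empty_or_nonempty
    · rw [Subtype.ext (hAB.antisymm (Set.sdiff_eq_empty.mp hBA))]
    · have hsub : insert v A.1 ⊆ B.1 := Set.insert_subset hvB hAB
      let A' : {D : Set V // IsDomSet G D ∧ D.ncard ≤ k} :=
        ⟨insert v A.1, A.2.1.mono_s14 (Set.subset_insert v A.1),
          (Set.ncard_le_ncard hsub).trans B.2.2⟩
      have hadj : (KDomGraph G k).Adj A A' :=
        adj_iff.mpr ⟨v, (Set.symmDiff_singleton_of_notMem hvA).symm⟩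
      have hlt : (B.1 \ A'.1).ncard < m := by
        have hss : B.1 \ A'.1 ⊂ B.1 \ A.1 :=
          (Set.ssubset_iff_of_subset (Set.sdiff_subset_sdiff_right (Set.subset_insert v A.1))).mpr
            ⟨v, ⟨hvB, hvA⟩, fun hv => hv.2 (Set.mem_insert v A.1)⟩
        exact h ▸ Set.ncard_lt_ncard hss
      exact hadj.reachable.trans (ih _ hlt hsub rfl)

end KDomGraph

namespace IsCocktailParty

variable {V : Type*} [Finite V] {G : SimpleGraph V} {k : ℕ}

theorem isDomSet_iff [Nonempty V] (hG : IsCocktailParty G) (D : Set V) :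
    IsDomSet G D ↔ 2 ≤ D.ncard := by
  obtain ⟨f, hf, hfne, hadj⟩ := hG
  constructor
  · intro hD
    by_contra! hlt
    obtain rfl | ⟨u, rfl⟩ := (Set.ncard_le_one_iff_eq).mp (Nat.le_of_lt_succ hlt)
    · obtain ⟨u, hu, -⟩ := hD (Classical.arbitrary V) (Set.notMem_empty _)
      exact hu
    · obtain ⟨w, rfl, hw⟩ := hD (f u) (hfne u)
      exact ((hadj w (f w)).mp hw).2 rfl
  · intro h2 v hv
    obtain ⟨a, ha, b, hb, hab⟩ := (Set.one_lt_ncard D.toFinite).mp h2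
    by_cases hfa : f a = v
    · refine ⟨b, hb, (hadj b v).mpr ⟨fun h => hv (h ▸ hb), fun h => hab (hf.injective ?_)⟩⟩
      rw [hfa, h]
    · exact ⟨a, ha, (hadj a v).mpr ⟨fun h => hv (h ▸ ha), hfa⟩⟩

variable [Nonempty V]

theorem ncard_neighborSet_kDomGraph (hG : IsCocktailParty G)
    (A : {D : Set V // IsDomSet G D ∧ D.ncard ≤ k}) :
    ((KDomGraph G k).neighborSet A).ncard =
      (if 2 < A.1.ncard then A.1.ncard else 0) +
        if A.1.ncard < k then Nat.card V - A.1.ncard else 0 := by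
  have h2 := (hG.isDomSet_iff A.1).mp A.2.1
  have hk := A.2.2
  rw [KDomGraph.ncard_neighborSet]
  simp only [hG.isDomSet_iff]
  rw [Set.ncard_setOf_ncard_symmDiff_singleton A.1 (fun j => 2 ≤ j ∧ j ≤ k)]
  congr 1 <;> apply if_congr <;> omega

theorem kDomGraph_reachable_pair (hG : IsCocktailParty G) (hk : 2 < k)
    (A : {D : Set V // IsDomSet G D ∧ D.ncard ≤ k}) {a b : V} (ha : a ∈ A.1) (hab : a ≠ b) :
    (KDomGraph G k).Reachable A
      ⟨{a, b}, (hG.isDomSet_iff _).mpr (Set.ncard_pair hab).ge,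
        (Set.ncard_pair hab).trans_le (by omega)⟩ := by
  obtain ⟨a', ha', ha'a⟩ := Set.exists_ne_of_one_lt_ncard ((hG.isDomSet_iff A.1).mp A.2.1) a
  have hT : ({a, a'} : Set V).ncard = 2 := Set.ncard_pair ha'a.symm
  have hTS_sub : ({a, a'} : Set V) ⊆ {a, a', b} :=
    Set.insert_subset_insert (Set.singleton_subset_iff.mpr (Set.mem_insert a' {b}))
  have hS : ({a, a', b} : Set V).ncard ≤ 3 := by
    have := Set.ncard_insert_le a {a', b}
    have := Set.ncard_insert_le a' {b}
    rw [Set.ncard_singleton] at this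
    omega
  let T : {D : Set V // IsDomSet G D ∧ D.ncard ≤ k} :=
    ⟨{a, a'}, (hG.isDomSet_iff _).mpr hT.ge, by omega⟩
  let S : {D : Set V // IsDomSet G D ∧ D.ncard ≤ k} :=
    ⟨{a, a', b}, (hG.isDomSet_iff _).mpr (hT ▸ Set.ncard_le_ncard hTS_sub), by omega⟩
  have hTA : (KDomGraph G k).Reachable T A :=
    KDomGraph.reachable_of_subset (Set.insert_subset ha (Set.singleton_subset_iff.mpr ha'))
  have hTS : (KDomGraph G k).Reachable T S := KDomGraph.reachable_of_subset hTS_sub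
  refine hTA.symm.trans (hTS.trans (KDomGraph.reachable_of_subset ?_).symm)
  exact Set.insert_subset_insert (Set.singleton_subset_iff.mpr (Set.mem_insert_of_mem a' rfl))

theorem kDomGraph_reachable (hG : IsCocktailParty G) (hk : 2 < k)
    (A B : {D : Set V // IsDomSet G D ∧ D.ncard ≤ k}) : (KDomGraph G k).Reachable A B := by
  have hA2 := (hG.isDomSet_iff A.1).mp A.2.1
  obtain ⟨a, ha⟩ := Set.nonempty_of_ncard_ne_zero (s := A.1) (by omega)
  obtain ⟨b, hb, hba⟩ := Set.exists_ne_of_one_lt_ncard ((hG.isDomSet_iff B.1).mp B.2.1) a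
  have hA := hG.kDomGraph_reachable_pair hk A ha hba.symm
  have hB := hG.kDomGraph_reachable_pair hk B hb hba
  refine hA.trans (.trans ?_ hB.symm)
  convert SimpleGraph.Reachable.refl _ using 2
  exact Set.pair_comm b a

end IsCocktailParty

theorem kDomGraph_cocktailParty_eulerian_iff_general {V : Type*} [Fintype V] (G : SimpleGraph V)
    (hne : Even (Fintype.card V)) (hG : IsCocktailParty G)
    (k : ℕ) (hk1 : 2 < k) (hk2 : k < Fintype.card V) :
    IsEulerian (KDomGraph G k) ↔ Even k := by
  have : Nonempty V := Fintype.card_pos_iff.mp (zero_lt_two.trans (hk1.trans hk2))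
  have hdeg := hG.ncard_neighborSet_kDomGraph (k := k)
  simp only [Nat.card_eq_fintype_card] at hdeg
  constructor
  · rintro ⟨heven, -⟩
    obtain ⟨D, -, hD⟩ := Set.exists_subset_card_eq (s := (Set.univ : Set V)) (n := k)
      (by rw [Set.ncard_univ, Nat.card_eq_fintype_card]; omega)
    have hDk := heven ⟨D, (hG.isDomSet_iff D).mpr (by omega), hD.le⟩
    rwa [hdeg, hD, if_pos hk1, if_neg (lt_irrefl k), add_zero] at hDk
  · intro hk
    refine ⟨fun A => ?_, fun A _ B _ _ _ => hG.kDomGraph_reachable hk1 A B⟩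
    have h2 := (hG.isDomSet_iff A.1).mp A.2.1
    have hAk := A.2.2
    rw [Nat.even_iff] at hne hk
    rw [hdeg, Nat.even_iff]
    split_ifs <;> omega

/-- For the cocktail party graph on an even number `n ≥ 4` of vertices and `2 < k < n`,
the `k`-dominating graph is Eulerian iff `k` is even. -/
theorem kDomGraph_cocktailParty_eulerian_iff {V : Type*} [Fintype V] (G : SimpleGraph V)
    (hn : 4 ≤ Fintype.card V) (hne : Even (Fintype.card V)) (hG : IsCocktailParty G)
    (k : ℕ) (hk1 : 2 < k) (hk2 : k < Fintype.card V) :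
    IsEulerian (KDomGraph G k) ↔ Even k :=
  kDomGraph_cocktailParty_eulerian_iff_general G hne hG k hk1 hk2
end
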